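/- arXiv:1909.00514 — 6 statements merged into one kernel-verified Lean document; each statement's English description precedes it below -/
import Mathlib

section
/- Let G be a finite simple graph, let K be a 5-vertex clique of G, and let e be an edge of K. Define the edge-gadget ψ_{K,e} on triangles T of G by: ψ_{K,e}(T) = 1/3 if T is contained in K and |V(T) ∩ e| ∈ {0,2}; ψ_{K,e}(T) = −1/6 if T is contained in K and |V(T) ∩ e| = 1; and ψ_{K,e}(T) = 0 if T is not contained in K. Then for every edge f of G, the sum of ψ_{K,e}(T) over all triangles T of G containing f equals 1 if f = e, and equals 0 otherwise. -/
/-- The edge-gadget `ψ_{K,e}` for the edge `e = {x,y}` of a `5`-clique `K`: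
it assigns `1/3` to triangles `T ⊆ K` with `|V(T) ∩ e| ∈ {0,2}`, `-1/6` to triangles
`T ⊆ K` with `|V(T) ∩ e| = 1`, and `0` to triangles not contained in `K`. -/
noncomputable def edgeGadget {V : Type*} [DecidableEq V] (K : Finset V) (x y : V)
    (T : Finset V) : ℝ :=
  if T ⊆ K ∧ ((T ∩ ({x, y} : Finset V)).card = 0 ∨ (T ∩ ({x, y} : Finset V)).card = 2)
    then 1 / 3
  else if T ⊆ K ∧ (T ∩ ({x, y} : Finset V)).card = 1 then -(1 / 6)
  else 0

/-!
Only triangles inside `K` contribute. If the edge `f` lies in `K`, these are the three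
triangles `f ∪ {w}`, `w ∈ K \ f`. With `m = |f ∩ e|`, exactly `2 - m` of the vertices `w` lie
in `e`, so the sum is `(2 - m) ψ(m + 1) + (m + 1) ψ(m)`, where `ψ(k)` (`gadgetWeight k`) is the
value on a triangle meeting `e` in `k` vertices. This is `0` for `m = 0, 1` and `1` for `m = 2`,
i.e. for `f = e`.
-/

open Finset

namespace SimpleGraph

variable {V : Type*} [Fintype V] [DecidableEq V] {G : SimpleGraph V} [DecidableRel G.Adj]
  {K s : Finset V} {n : ℕ}

lemma filter_cliqueFinset_subset_eq_image (hK : G.IsClique K) (hsK : s ⊆ K)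
    (hs : #s + 1 = n) :
    {T ∈ G.cliqueFinset n | s ⊆ T ∧ T ⊆ K} = (K \ s).image (insert · s) := by
  ext T
  simp only [mem_filter, mem_cliqueFinset_iff, mem_image, mem_sdiff]
  constructor
  · rintro ⟨hT, hsT, hTK⟩
    obtain ⟨a, has, rfl⟩ := exists_eq_insert_iff.mpr ⟨hsT, hs.trans hT.card_eq.symm⟩
    exact ⟨a, ⟨hTK (mem_insert_self a s), has⟩, rfl⟩
  · rintro ⟨a, ⟨haK, has⟩, rfl⟩
    have hsub : insert a s ⊆ K := insert_subset haK hsK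
    exact ⟨⟨hK.subset (by exact_mod_cast hsub), by rw [card_insert_of_notMem has, hs]⟩,
      subset_insert a s, hsub⟩

lemma sum_cliqueFinset_of_support_subset {M : Type*} [AddCommMonoid M]
    (hK : G.IsClique K) (hsK : s ⊆ K) (hs : #s + 1 = n) (φ : Finset V → M)
    (hφ : ∀ T, ¬ T ⊆ K → φ T = 0) :
    ∑ T ∈ G.cliqueFinset n with s ⊆ T, φ T = ∑ a ∈ K \ s, φ (insert a s) := by
  rw [← sum_filter_of_ne (p := (· ⊆ K)) fun T _ hT => by_contra fun h => hT (hφ T h),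
    filter_filter, filter_cliqueFinset_subset_eq_image hK hsK hs, sum_image]
  intro a ha b _ hab
  exact (insert_inj (mem_sdiff.mp ha).2).mp hab

end SimpleGraph

namespace Finset

variable {α : Type*} [DecidableEq α]

lemma sum_comp_card_insert_inter {M : Type*} [AddCommMonoid M] (g : ℕ → M) {W s : Finset α}
    (hWs : Disjoint W s) (e : Finset α) :
    ∑ a ∈ W, g #(insert a s ∩ e) = #(W ∩ e) • g (#(s ∩ e) + 1) + #(W \ e) • g #(s ∩ e) := by
  rw [← sum_filter_add_sum_filter_not W (· ∈ e), filter_mem_eq_inter, filter_notMem_eq_sdiff,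
    ← sum_const, ← sum_const]
  congr 1 <;> refine sum_congr rfl fun a ha => ?_
  · obtain ⟨haW, hae⟩ := mem_inter.mp ha
    rw [insert_inter_of_mem hae,
      card_insert_of_notMem fun has => disjoint_left.mp hWs haW (mem_inter.mp has).1]
  · rw [insert_inter_of_notMem (mem_sdiff.mp ha).2]

lemma eq_iff_card_inter_eq {s t : Finset α} (h : #s = #t) : s = t ↔ #(s ∩ t) = #s := by
  refine ⟨fun hst => by rw [hst, inter_self], fun hst => ?_⟩
  have hs : s ∩ t = s := eq_of_subset_of_card_le inter_subset_left hst.ge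
  exact eq_of_subset_of_card_le (inter_eq_left.mp hs) h.ge

end Finset

noncomputable def gadgetWeight (n : ℕ) : ℝ :=
  if n = 0 ∨ n = 2 then 1 / 3 else if n = 1 then -(1 / 6) else 0

lemma edgeGadget_eq_ite {V : Type*} [DecidableEq V] (K : Finset V) (x y : V) (T : Finset V) :
    edgeGadget K x y T = if T ⊆ K then gadgetWeight #(T ∩ {x, y}) else 0 := by
  unfold edgeGadget gadgetWeight
  split_ifs <;> simp_all

lemma gadgetWeight_balance {m : ℕ} (hm : m ≤ 2) :
    (2 - m) • gadgetWeight (m + 1) + (m + 1) • gadgetWeight m = if m = 2 then 1 else 0 := by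
  interval_cases m <;> norm_num [gadgetWeight]

/-- For a `5`-clique `K` of `G`, an edge `e = {x,y}` of `K`, and any
edge `f = {u,v}` of `G`, the sum of `ψ_{K,e}(T)` over all triangles `T` of `G`
containing `f` equals `1` if `f = e` and `0` otherwise. -/
theorem edgeGadget_sum {V : Type*} [Fintype V] [DecidableEq V]
    (G : SimpleGraph V) [DecidableRel G.Adj]
    (K : Finset V) (hK : G.IsNClique 5 K)
    (x y : V) (hx : x ∈ K) (hy : y ∈ K) (hxy : x ≠ y)
    (u v : V) (huv : G.Adj u v) :
    ∑ T ∈ (G.cliqueFinset 3).filter (fun T => u ∈ T ∧ v ∈ T), edgeGadget K x y T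
      = if ({u, v} : Finset V) = ({x, y} : Finset V) then 1 else 0 := by
  have heK : ({x, y} : Finset V) ⊆ K := insert_subset hx (singleton_subset_iff.mpr hy)
  have hf : #({u, v} : Finset V) = 2 := card_pair huv.ne
  have hfilter :
      {T ∈ G.cliqueFinset 3 | u ∈ T ∧ v ∈ T} = {T ∈ G.cliqueFinset 3 | {u, v} ⊆ T} := by
    simp only [insert_subset_iff, singleton_subset_iff]
  rw [hfilter]
  by_cases hfK : ({u, v} : Finset V) ⊆ K
  swap
  · rw [if_neg fun h : ({u, v} : Finset V) = {x, y} => hfK (h ▸ heK)]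
    refine sum_eq_zero fun T hT => ?_
    rw [edgeGadget_eq_ite, if_neg fun hTK => hfK ((mem_filter.mp hT).2.trans hTK)]
  set m := #(({u, v} : Finset V) ∩ {x, y})
  have hm : m ≤ 2 := (card_le_card inter_subset_left).trans_eq hf
  have hWe : #((K \ {u, v}) ∩ {x, y}) = 2 - m := by
    rw [sdiff_inter_right_comm, inter_eq_right.mpr heK, card_sdiff, card_pair hxy]
  have hWe' : #((K \ {u, v}) \ {x, y}) = m + 1 := by
    have := card_sdiff_add_card_inter (K \ {u, v}) {x, y}
    rw [card_sdiff_of_subset hfK, hK.card_eq, hf, hWe] at this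
    omega
  rw [SimpleGraph.sum_cliqueFinset_of_support_subset hK.isClique hfK (by rw [hf]) _
      fun T hT => by rw [edgeGadget_eq_ite, if_neg hT],
    sum_congr rfl fun a ha => by
      rw [edgeGadget_eq_ite, if_pos (insert_subset (mem_sdiff.mp ha).1 hfK)],
    sum_comp_card_insert_inter _ sdiff_disjoint, hWe, hWe', gadgetWeight_balance hm]
  exact if_congr (by rw [eq_iff_card_inter_eq (hf.trans (card_pair hxy).symm), hf]) rfl rfl
end

section
/- Let G be a finite simple graph on n vertices with minimum degree strictly greater than (3/4)·n. For an ordered r-clique (v₁,…,v_r) of G with r ∈ {2,3,4}, let W(v₁,…,v_r) = ∏_{i=2}^{r} 1/|K_{i+1}(G, {v₁,…,v_i})|, where |K_{i+1}(G,S)| is the number of (i+1)-vertex cliques of G containing S. Define w_G on triangles T of G by w_G(T) = (1/2)·Σ_{(v₁,…,v₅)} W(v₁,v₂,v₃,v₄)·ψ_{K,v₁v₂}(T), where the sum is over all ordered 5-cliques K = (v₁,…,v₅) of G and ψ_{K,v₁v₂} is the edge-gadget of the edge v₁v₂ in the 5-clique on {v₁,…,v₅}. Then for every edge e of G, the sum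 of w_G(T) over all triangles T of G containing e equals 1. -/
/-- `|K_r(G,S)|`: the number of `r`-vertex cliques of `G` containing the set `S`. -/
def nCliquesOn {V : Type*} [Fintype V] [DecidableEq V] (G : SimpleGraph V)
    [DecidableRel G.Adj] (r : ℕ) (S : Finset V) : ℕ :=
  ((G.cliqueFinset r).filter (fun C => S ⊆ C)).card

/-- `W(v₁,…,v₄) = ∏_{i=2}^{4} 1/|K_{i+1}(G,{v₁,…,v_i})|`. -/
noncomputable def W4 {V : Type*} [Fintype V] [DecidableEq V] (G : SimpleGraph V)
    [DecidableRel G.Adj] (v1 v2 v3 v4 : V) : ℝ :=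
  (1 / (nCliquesOn G 3 {v1, v2} : ℝ)) * (1 / (nCliquesOn G 4 {v1, v2, v3} : ℝ)) *
    (1 / (nCliquesOn G 5 {v1, v2, v3, v4} : ℝ))

/-- `w_G(T) = (1/2)·Σ_{(v₁,…,v₅)} W(v₁,v₂,v₃,v₄)·ψ_{K,v₁v₂}(T)`, summing over all
ordered `5`-cliques `(v₁,…,v₅)` of `G` (tuples of distinct, pairwise adjacent
vertices), where `K` is the `5`-clique on `{v₁,…,v₅}`. -/
noncomputable def wTri {V : Type*} [Fintype V] [DecidableEq V] (G : SimpleGraph V)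
    [DecidableRel G.Adj] (T : Finset V) : ℝ :=
  (1 / 2) * ∑ v1, ∑ v2, ∑ v3, ∑ v4, ∑ v5,
    if ({v1, v2, v3, v4, v5} : Finset V) ∈ G.cliqueFinset 5 then
      W4 G v1 v2 v3 v4 * edgeGadget ({v1, v2, v3, v4, v5} : Finset V) v1 v2 T
    else 0


/-! ### Auxiliary machinery -/

open Finset

section Aux

/-- Integer-valued version of the edge-gadget (six times the value). -/
def edgeGadgetZ {V : Type*} [DecidableEq V] (K : Finset V) (x y : V)
    (T : Finset V) : ℤ :=
  if T ⊆ K ∧ ((T ∩ ({x, y} : Finset V)).card = 0 ∨ (T ∩ ({x, y} : Finset V)).card = 2)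
    then 2
  else if T ⊆ K ∧ (T ∩ ({x, y} : Finset V)).card = 1 then -1
  else 0

lemma edgeGadget_eq_cast {V : Type*} [DecidableEq V] (K : Finset V) (x y : V) (T : Finset V) :
    edgeGadget K x y T = (1 / 6 : ℝ) * (edgeGadgetZ K x y T : ℤ) := by
  unfold edgeGadget edgeGadgetZ
  split_ifs <;> norm_num

lemma edgeGadgetZ_map {α V : Type*} [DecidableEq α] [DecidableEq V] (f : α ↪ V)
    (K T : Finset α) (x y : α) :
    edgeGadgetZ (K.map f) (f x) (f y) (T.map f) = edgeGadgetZ K x y T := by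
  unfold edgeGadgetZ
  have h1 : T.map f ⊆ K.map f ↔ T ⊆ K := Finset.map_subset_map
  have h2 : (T.map f ∩ ({f x, f y} : Finset V)) = (T ∩ ({x, y} : Finset α)).map f := by
    rw [Finset.map_inter]; congr 1; simp [Finset.map_insert]
  simp only [h2, h1, Finset.card_map]

set_option maxRecDepth 100000 in
lemma fin5_gadget : ∀ a b : Fin 5, a ≠ b →
    (∑ t ∈ (Finset.univ : Finset (Fin 5)).powersetCard 3,
      if a ∈ t ∧ b ∈ t then edgeGadgetZ Finset.univ 0 1 t else 0)
    = if (a = 0 ∧ b = 1) ∨ (a = 1 ∧ b = 0) then 6 else 0 := by decide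

lemma gadget_sum {V : Type*} [Fintype V] [DecidableEq V] (G : SimpleGraph V)
    [DecidableRel G.Adj] (u v v1 v2 v3 v4 v5 : V) (huv : G.Adj u v)
    (hK : ({v1, v2, v3, v4, v5} : Finset V) ∈ G.cliqueFinset 5) :
    ∑ T ∈ (G.cliqueFinset 3).filter (fun T => u ∈ T ∧ v ∈ T),
      edgeGadget ({v1, v2, v3, v4, v5} : Finset V) v1 v2 T
    = if (v1 = u ∧ v2 = v) ∨ (v1 = v ∧ v2 = u) then 1 else 0 := by
  classical
  rw [SimpleGraph.mem_cliqueFinset_iff] at hK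
  set l : List V := [v1, v2, v3, v4, v5] with hl
  have hlf : l.toFinset = ({v1, v2, v3, v4, v5} : Finset V) := by simp [hl]
  have hnd : l.Nodup := by
    have hlen : l.toFinset.card = l.length := by rw [hlf, hK.card_eq]; rfl
    have := (Multiset.toFinset_card_eq_card_iff_nodup (m := (l : Multiset V))).mp hlen
    exact Multiset.coe_nodup.mp this
  have hf : Function.Injective l.get := List.nodup_iff_injective_get.mp hnd
  have hlen5 : l.length = 5 := rfl
  let g : Fin 5 ↪ V := ⟨fun i => l.get (Fin.cast hlen5.symm i), by
    intro i j hij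
    have := hf hij
    simpa [Fin.ext_iff] using this⟩
  have hg0 : g 0 = v1 := rfl
  have hg1 : g 1 = v2 := rfl
  have hKmap : ({v1, v2, v3, v4, v5} : Finset V) = (Finset.univ : Finset (Fin 5)).map g := by
    ext x
    simp only [Finset.mem_map, Finset.mem_univ, true_and, Finset.mem_insert,
      Finset.mem_singleton]
    constructor
    · rintro (rfl | rfl | rfl | rfl | rfl)
      exacts [⟨0, rfl⟩, ⟨1, rfl⟩, ⟨2, rfl⟩, ⟨3, rfl⟩, ⟨4, rfl⟩]
    · rintro ⟨a, rfl⟩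
      fin_cases a
      · exact Or.inl rfl
      · exact Or.inr (Or.inl rfl)
      · exact Or.inr (Or.inr (Or.inl rfl))
      · exact Or.inr (Or.inr (Or.inr (Or.inl rfl)))
      · exact Or.inr (Or.inr (Or.inr (Or.inr rfl)))
  by_cases huK : u ∈ ({v1, v2, v3, v4, v5} : Finset V) ∧ v ∈ ({v1, v2, v3, v4, v5} : Finset V)
  · obtain ⟨hu, hv⟩ := huK
    rw [hKmap] at hu hv
    obtain ⟨a, -, rfl⟩ := Finset.mem_map.mp hu
    obtain ⟨b, -, rfl⟩ := Finset.mem_map.mp hv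
    have hab : a ≠ b := fun h => (G.ne_of_adj huv) (by rw [h])
    have hsubset : (({v1, v2, v3, v4, v5} : Finset V).powersetCard 3).filter
        (fun T => g a ∈ T ∧ g b ∈ T) ⊆
        (G.cliqueFinset 3).filter (fun T => g a ∈ T ∧ g b ∈ T) := by
      intro T hT
      simp only [Finset.mem_filter, Finset.mem_powersetCard] at hT ⊢
      exact ⟨SimpleGraph.mem_cliqueFinset_iff.mpr
        ⟨hK.1.subset (Finset.coe_subset.mpr hT.1.1), hT.1.2⟩, hT.2⟩
    have hzero : ∀ T ∈ (G.cliqueFinset 3).filter (fun T => g a ∈ T ∧ g b ∈ T),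
        T ∉ (({v1, v2, v3, v4, v5} : Finset V).powersetCard 3).filter
          (fun T => g a ∈ T ∧ g b ∈ T) →
        edgeGadget ({v1, v2, v3, v4, v5} : Finset V) v1 v2 T = 0 := by
      intro T hT1 hT2
      simp only [Finset.mem_filter, Finset.mem_powersetCard,
        SimpleGraph.mem_cliqueFinset_iff] at hT1 hT2
      have hnsub : ¬ T ⊆ ({v1, v2, v3, v4, v5} : Finset V) := by
        intro h; exact hT2 ⟨⟨h, hT1.1.2⟩, hT1.2⟩
      unfold edgeGadget
      rw [if_neg (by tauto), if_neg (by tauto)]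
    rw [← Finset.sum_subset hsubset hzero, Finset.sum_filter, hKmap, ← hg0, ← hg1,
      Finset.powersetCard_map, Finset.sum_map]
    simp only [RelEmbedding.coe_toEmbedding, Finset.mapEmbedding_apply, Finset.mem_map']
    have hgad : ∀ t : Finset (Fin 5),
        edgeGadget ((Finset.univ : Finset (Fin 5)).map g) (g 0) (g 1) (t.map g)
          = (1 / 6 : ℝ) * ((edgeGadgetZ (Finset.univ : Finset (Fin 5)) 0 1 t : ℤ) : ℝ) := by
      intro t
      rw [edgeGadget_eq_cast, edgeGadgetZ_map]
    simp only [hgad]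
    have hsplit : ∀ t : Finset (Fin 5),
        (if a ∈ t ∧ b ∈ t then
            (1 / 6 : ℝ) * ((edgeGadgetZ (Finset.univ : Finset (Fin 5)) 0 1 t : ℤ) : ℝ) else 0)
        = (1 / 6 : ℝ) * (((if a ∈ t ∧ b ∈ t then
            edgeGadgetZ (Finset.univ : Finset (Fin 5)) 0 1 t else 0 : ℤ)) : ℝ) := by
      intro t; split_ifs <;> simp
    simp only [hsplit]
    rw [← Finset.mul_sum, ← Int.cast_sum, fin5_gadget a b hab]
    have hcond : ((g 0 = g a ∧ g 1 = g b) ∨ (g 0 = g b ∧ g 1 = g a))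
        ↔ ((a = 0 ∧ b = 1) ∨ (a = 1 ∧ b = 0)) := by
      simp [g.injective.eq_iff, eq_comm]; tauto
    rw [if_congr hcond rfl rfl]
    split_ifs <;> norm_num
  · have hrhs : ¬ ((v1 = u ∧ v2 = v) ∨ (v1 = v ∧ v2 = u)) := by
      rintro (⟨rfl, rfl⟩ | ⟨rfl, rfl⟩) <;>
        exact huK ⟨by simp, by simp⟩
    rw [if_neg hrhs]
    apply Finset.sum_eq_zero
    intro T hT
    simp only [Finset.mem_filter] at hT
    have hnsub : ¬ T ⊆ ({v1, v2, v3, v4, v5} : Finset V) :=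
      fun hsubK => huK ⟨hsubK hT.2.1, hsubK hT.2.2⟩
    unfold edgeGadget
    rw [if_neg (by tauto), if_neg (by tauto)]

end Aux

section Count

variable {V : Type*} [Fintype V] [DecidableEq V] {G : SimpleGraph V} [DecidableRel G.Adj]

lemma card_ext_eq (r : ℕ) (S : Finset V) (hS : S ∈ G.cliqueFinset r) :
    (Finset.univ.filter fun w => insert w S ∈ G.cliqueFinset (r + 1)).card
      = nCliquesOn G (r + 1) S := by
  rw [SimpleGraph.mem_cliqueFinset_iff] at hS
  unfold nCliquesOn
  apply Finset.card_bij (fun w _ => insert w S)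
  · intro w hw
    simp only [Finset.mem_filter] at hw ⊢
    exact ⟨hw.2, Finset.subset_insert _ _⟩
  · intro w1 h1 w2 h2 heq
    simp only [Finset.mem_filter, SimpleGraph.mem_cliqueFinset_iff] at h1 h2
    have hw1 : w1 ∉ S := by
      intro hmem
      rw [Finset.insert_eq_self.mpr hmem] at h1
      have h1c := h1.2.card_eq
      have h2c := hS.card_eq
      omega
    have : w1 ∈ insert w2 S := heq ▸ Finset.mem_insert_self w1 S
    rcases Finset.mem_insert.mp this with h | h
    · exact h
    · exact absurd h hw1
  · intro C hC
    simp only [Finset.mem_filter, SimpleGraph.mem_cliqueFinset_iff] at hC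
    have hsub : S ⊆ C := hC.2
    have hcard : (C \ S).card = 1 := by
      rw [Finset.card_sdiff_of_subset hsub, hC.1.card_eq, hS.card_eq]; omega
    obtain ⟨w, hw⟩ := Finset.card_eq_one.mp hcard
    have hins : insert w S = C := by
      rw [Finset.insert_eq, ← hw]
      exact Finset.sdiff_union_of_subset hsub
    refine ⟨w, ?_, hins⟩
    simp only [Finset.mem_filter, Finset.mem_univ, true_and, hins]
    exact SimpleGraph.mem_cliqueFinset_iff.mpr hC.1

lemma nCliquesOn_pos
    (hδ : ∀ w : V, (3 / 4 : ℝ) * (Fintype.card V : ℝ) < (G.degree w : ℝ))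
    (r : ℕ) (hr1 : 1 ≤ r) (hr4 : r ≤ 4) (S : Finset V) (hS : S ∈ G.cliqueFinset r) :
    0 < nCliquesOn G (r + 1) S := by
  rw [← card_ext_eq r S hS, Finset.card_pos]
  have hS' := SimpleGraph.mem_cliqueFinset_iff.mp hS
  have hSne : S.Nonempty := by
    rw [← Finset.card_pos, hS'.card_eq]; omega
  set n := Fintype.card V with hn
  set Bd := S.biUnion (fun s => Finset.univ \ G.neighborFinset s) with hBd
  have hcardBd : (Bd.card : ℝ) < n := by
    calc (Bd.card : ℝ) ≤ ∑ s ∈ S, (((Finset.univ \ G.neighborFinset s).card : ℕ) : ℝ) := by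
          exact_mod_cast Nat.cast_le.mpr Finset.card_biUnion_le
      _ < ∑ _s ∈ S, ((n : ℝ) / 4) := by
          apply Finset.sum_lt_sum_of_nonempty hSne
          intro s _
          have hdeg := hδ s
          have hle : (G.neighborFinset s).card ≤ n := Finset.card_le_univ _
          rw [Finset.card_sdiff_of_subset (Finset.subset_univ _), Finset.card_univ, ← hn,
            Nat.cast_sub hle]
          have hdc : ((G.neighborFinset s).card : ℝ) = (G.degree s : ℝ) := by
            rw [G.card_neighborFinset_eq_degree]
          rw [hdc]
          linarith
      _ = (S.card : ℝ) * ((n : ℝ) / 4) := by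
          rw [Finset.sum_const, nsmul_eq_mul]
      _ ≤ (n : ℝ) := by
          rw [hS'.card_eq]
          have hr' : (r : ℝ) ≤ 4 := by exact_mod_cast hr4
          have hn0 : (0 : ℝ) ≤ (n : ℝ) := Nat.cast_nonneg n
          nlinarith
  have hBdlt : Bd.card < n := by exact_mod_cast hcardBd
  have hex : ∃ w, w ∉ Bd := by
    by_contra h
    push_neg at h
    have : Bd = Finset.univ := Finset.eq_univ_iff_forall.mpr h
    rw [this, Finset.card_univ, ← hn] at hBdlt
    exact lt_irrefl _ hBdlt
  obtain ⟨w, hw⟩ := hex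
  have hadj : ∀ s ∈ S, G.Adj w s := by
    intro s hs
    by_contra hna
    exact hw (Finset.mem_biUnion.mpr ⟨s, hs, by
      simp only [Finset.mem_sdiff, Finset.mem_univ, true_and, SimpleGraph.mem_neighborFinset]
      exact fun h => hna h.symm⟩)
  refine ⟨w, Finset.mem_filter.mpr ⟨Finset.mem_univ _, ?_⟩⟩
  rw [SimpleGraph.mem_cliqueFinset_iff]
  exact hS'.insert hadj

lemma step_sum
    (hδ : ∀ w : V, (3 / 4 : ℝ) * (Fintype.card V : ℝ) < (G.degree w : ℝ))
    (r : ℕ) (hr1 : 1 ≤ r) (hr4 : r ≤ 4) (S : Finset V) (hcard : S.card ≤ r) (c : ℝ) :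
    (∑ w, if insert w S ∈ G.cliqueFinset (r + 1)
        then (1 / (nCliquesOn G (r + 1) S : ℝ)) * c else 0)
      = if S ∈ G.cliqueFinset r then c else 0 := by
  by_cases hS : S ∈ G.cliqueFinset r
  · rw [if_pos hS, Finset.sum_ite, Finset.sum_const_zero, add_zero, Finset.sum_const,
      nsmul_eq_mul, card_ext_eq r S hS]
    have hpos := nCliquesOn_pos hδ r hr1 hr4 S hS
    have hne : ((nCliquesOn G (r + 1) S : ℕ) : ℝ) ≠ 0 :=
      Nat.cast_ne_zero.mpr (Nat.pos_iff_ne_zero.mp hpos)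
    field_simp
  · rw [if_neg hS]
    apply Finset.sum_eq_zero
    intro w _
    rw [if_neg]
    intro hmem
    apply hS
    rw [SimpleGraph.mem_cliqueFinset_iff] at hmem ⊢
    by_cases hwS : w ∈ S
    · rw [Finset.insert_eq_self.mpr hwS] at hmem
      have := hmem.card_eq
      omega
    · refine ⟨hmem.1.subset ?_, ?_⟩
      · exact_mod_cast Finset.coe_subset.mpr (Finset.subset_insert w S)
      · have h1 := Finset.card_insert_of_notMem hwS
        have h2 := hmem.card_eq
        omega

end Count


section Main

variable {V : Type*} [Fintype V] [DecidableEq V]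

lemma sum_if_const {α : Type*} (s : Finset α) (p : Prop) [Decidable p] (f : α → ℝ) :
    (∑ x ∈ s, if p then f x else 0) = if p then ∑ x ∈ s, f x else 0 := by
  split_ifs <;> simp

lemma swap5 {α : Type*} (s : Finset α) (f : V → V → V → V → V → α → ℝ) :
    (∑ T ∈ s, ∑ v1, ∑ v2, ∑ v3, ∑ v4, ∑ v5, f v1 v2 v3 v4 v5 T)
      = ∑ v1, ∑ v2, ∑ v3, ∑ v4, ∑ v5, ∑ T ∈ s, f v1 v2 v3 v4 v5 T := by
  rw [Finset.sum_comm]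
  refine Finset.sum_congr rfl fun v1 _ => ?_
  rw [Finset.sum_comm]
  refine Finset.sum_congr rfl fun v2 _ => ?_
  rw [Finset.sum_comm]
  refine Finset.sum_congr rfl fun v3 _ => ?_
  rw [Finset.sum_comm]
  refine Finset.sum_congr rfl fun v4 _ => ?_
  rw [Finset.sum_comm]

lemma shift5 (a b c d e : V) : ({a, b, c, d, e} : Finset V) = insert e {a, b, c, d} := by
  ext x; simp; tauto

lemma shift4 (a b c d : V) : ({a, b, c, d} : Finset V) = insert d {a, b, c} := by
  ext x; simp; tauto

lemma shift3 (a b c : V) : ({a, b, c} : Finset V) = insert c {a, b} := by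
  ext x; simp; tauto

lemma card2_le (a b : V) : ({a, b} : Finset V).card ≤ 2 :=
  (Finset.card_insert_le _ _).trans (by simp)

lemma card3_le (a b c : V) : ({a, b, c} : Finset V).card ≤ 3 :=
  (Finset.card_insert_le _ _).trans (by have := card2_le b c; omega)

lemma card4_le (a b c d : V) : ({a, b, c, d} : Finset V).card ≤ 4 :=
  (Finset.card_insert_le _ _).trans (by have := card3_le b c d; omega)

end Main

/-- If `δ(G) > (3/4)·n`, then for every edge `e = {u,v}` of `G`, the
sum of `w_G(T)` over all triangles `T` of `G` containing `e` equals `1`. -/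
theorem wTri_sum_edge {V : Type*} [Fintype V] [DecidableEq V]
    (G : SimpleGraph V) [DecidableRel G.Adj]
    (hδ : ∀ w : V, (3 / 4 : ℝ) * (Fintype.card V : ℝ) < (G.degree w : ℝ))
    (u v : V) (huv : G.Adj u v) :
    ∑ T ∈ (G.cliqueFinset 3).filter (fun T => u ∈ T ∧ v ∈ T), wTri G T = 1 := by
    classical
  have hne := G.ne_of_adj huv
  simp only [wTri]
  rw [← Finset.mul_sum, swap5]
  have key : ∀ v1 v2 v3 v4 v5 : V,
      (∑ T ∈ (G.cliqueFinset 3).filter (fun T => u ∈ T ∧ v ∈ T),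
        if ({v1, v2, v3, v4, v5} : Finset V) ∈ G.cliqueFinset 5 then
          W4 G v1 v2 v3 v4 * edgeGadget ({v1, v2, v3, v4, v5} : Finset V) v1 v2 T else 0)
      = if ({v1, v2, v3, v4, v5} : Finset V) ∈ G.cliqueFinset 5 then
          W4 G v1 v2 v3 v4 *
            (if (v1 = u ∧ v2 = v) ∨ (v1 = v ∧ v2 = u) then 1 else 0) else 0 := by
    intro v1 v2 v3 v4 v5
    by_cases h : ({v1, v2, v3, v4, v5} : Finset V) ∈ G.cliqueFinset 5
    · simp only [if_pos h, ← Finset.mul_sum, gadget_sum G u v v1 v2 v3 v4 v5 huv h]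
    · simp only [if_neg h, Finset.sum_const_zero]
  simp only [key]
  have hsplit : ∀ v1 v2 v3 v4 v5 : V,
      (if ({v1, v2, v3, v4, v5} : Finset V) ∈ G.cliqueFinset 5 then
          W4 G v1 v2 v3 v4 *
            (if (v1 = u ∧ v2 = v) ∨ (v1 = v ∧ v2 = u) then 1 else 0) else 0)
      = (if v1 = u then (if v2 = v then
            (if ({v1, v2, v3, v4, v5} : Finset V) ∈ G.cliqueFinset 5 then
              W4 G v1 v2 v3 v4 else 0) else 0) else 0)
        + (if v1 = v then (if v2 = u then
            (if ({v1, v2, v3, v4, v5} : Finset V) ∈ G.cliqueFinset 5 then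
              W4 G v1 v2 v3 v4 else 0) else 0) else 0) := by
    intro v1 v2 v3 v4 v5
    by_cases hc : (v1 = u ∧ v2 = v) ∨ (v1 = v ∧ v2 = u)
    · rw [if_congr Iff.rfl (by rw [if_pos hc, mul_one]) rfl]
      rcases hc with ⟨rfl, rfl⟩ | ⟨rfl, rfl⟩
      · simp [hne]
      · simp [Ne.symm hne]
    · rw [if_congr Iff.rfl (by rw [if_neg hc, mul_zero]) rfl, ite_self]
      rcases not_and_or.mp (fun h => hc (Or.inl h)) with h | h <;>
        rcases not_and_or.mp (fun h' => hc (Or.inr h')) with h' | h' <;>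
        simp [h, h']
  simp only [hsplit, Finset.sum_add_distrib, sum_if_const, Finset.sum_ite_eq',
    Finset.mem_univ, if_true]
  -- now the two branches
  have hAeq :
      (∑ v3, ∑ v4, ∑ v5, if ({v, u, v3, v4, v5} : Finset V) ∈ G.cliqueFinset 5 then
          W4 G v u v3 v4 else 0)
      = (∑ v3, ∑ v4, ∑ v5, if ({u, v, v3, v4, v5} : Finset V) ∈ G.cliqueFinset 5 then
          W4 G u v v3 v4 else 0) := by
    refine Finset.sum_congr rfl fun v3 _ => ?_
    refine Finset.sum_congr rfl fun v4 _ => ?_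
    refine Finset.sum_congr rfl fun v5 _ => ?_
    rw [Finset.insert_comm v u, show W4 G v u v3 v4 = W4 G u v v3 v4 by
      simp only [W4, Finset.pair_comm v u, Finset.insert_comm v u]]
  rw [hAeq]
  have hA : (∑ v3, ∑ v4, ∑ v5, if ({u, v, v3, v4, v5} : Finset V) ∈ G.cliqueFinset 5 then
      W4 G u v v3 v4 else 0) = 1 := by
    have h5 : ∀ v3 v4 : V,
        (∑ v5, if ({u, v, v3, v4, v5} : Finset V) ∈ G.cliqueFinset 5 then
          W4 G u v v3 v4 else 0)
        = if ({u, v, v3, v4} : Finset V) ∈ G.cliqueFinset 4 then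
            (1 / (nCliquesOn G 4 {u, v, v3} : ℝ)) * (1 / (nCliquesOn G 3 {u, v} : ℝ))
          else 0 := by
      intro v3 v4
      rw [← step_sum hδ 4 (by norm_num) (by norm_num) {u, v, v3, v4} (card4_le u v v3 v4)
        ((1 / (nCliquesOn G 4 {u, v, v3} : ℝ)) * (1 / (nCliquesOn G 3 {u, v} : ℝ)))]
      refine Finset.sum_congr rfl fun v5 _ => ?_
      rw [show ({u, v, v3, v4, v5} : Finset V) = insert v5 {u, v, v3, v4} from shift5 u v v3 v4 v5]
      refine if_congr Iff.rfl ?_ rfl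
      simp only [W4]; ring
    simp only [h5]
    have h4 : ∀ v3 : V,
        (∑ v4, if ({u, v, v3, v4} : Finset V) ∈ G.cliqueFinset 4 then
            (1 / (nCliquesOn G 4 {u, v, v3} : ℝ)) * (1 / (nCliquesOn G 3 {u, v} : ℝ)) else 0)
        = if ({u, v, v3} : Finset V) ∈ G.cliqueFinset 3 then
            (1 / (nCliquesOn G 3 {u, v} : ℝ)) else 0 := by
      intro v3
      rw [← step_sum hδ 3 (by norm_num) (by norm_num) {u, v, v3} (card3_le u v v3)
        (1 / (nCliquesOn G 3 {u, v} : ℝ))]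
      refine Finset.sum_congr rfl fun v4 _ => ?_
      rw [show ({u, v, v3, v4} : Finset V) = insert v4 {u, v, v3} from shift4 u v v3 v4]
    simp only [h4]
    have h3 : (∑ v3, if ({u, v, v3} : Finset V) ∈ G.cliqueFinset 3 then
          (1 / (nCliquesOn G 3 {u, v} : ℝ)) else 0)
        = if ({u, v} : Finset V) ∈ G.cliqueFinset 2 then (1 : ℝ) else 0 := by
      rw [← step_sum hδ 2 (by norm_num) (by norm_num) {u, v} (card2_le u v) 1]
      refine Finset.sum_congr rfl fun v3 _ => ?_
      rw [show ({u, v, v3} : Finset V) = insert v3 {u, v} from shift3 u v v3, mul_one]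
    have hpair : ({u, v} : Finset V) ∈ G.cliqueFinset 2 := by
      rw [SimpleGraph.mem_cliqueFinset_iff]
      constructor
      · simp only [Finset.coe_insert, Finset.coe_singleton]
        exact SimpleGraph.isClique_pair.mpr fun _ => huv
      · exact Finset.card_pair hne
    rw [h3, if_pos hpair]
  rw [hA]
  norm_num
end

section
/- Let d = (7 − √21)/14. Let x, y, e₀, e, f, q₀ be real numbers with x ∈ [1−d, 1], y ∈ [1−d, 1], e₀ ∈ [x−d, x], e ∈ [x+y−1, 1], f ∈ [y−d, y], q₀ ∈ [e+e₀−x, 1]. Define Ŵ₅(x,y,e₀,e,f,q₀) = e₀·max(e₀−e, 0)/(q₀·e) + e₀²·q₀·max(f−e, 0)/((q₀+f−y)·(e+f−y)·e·f) + e₀·max(e₀−e, 0)/((q₀+f−y)·e). Then Ŵ₅(x,y,e₀,e,f,q₀) ≤ Ŵ₅(x,y,e₀,e,f,e+e₀−x). -/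
/-- The objective function `Ŵ₅` of program (P5). -/
noncomputable def W5hat (x y e₀ e f q₀ : ℝ) : ℝ :=
  e₀ * max (e₀ - e) 0 / (q₀ * e)
    + e₀ ^ 2 * q₀ * max (f - e) 0 / ((q₀ + f - y) * (e + f - y) * e * f)
    + e₀ * max (e₀ - e) 0 / ((q₀ + f - y) * e)

/-!
Every term of `Ŵ₅` is antitone in `q₀` as long as `q₀ + f − y > 0`: the first and third
have the positive denominators `q₀ e` and `(q₀ + f − y) e`, which increase with `q₀`, and the
second is a nonnegative multiple of `q₀ / (q₀ + f − y)`, which decreases because `f ≤ y`.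
Since `d < 1/4`, the constraints keep `e`, `f`, `e + f − y` positive and give
`(e + e₀ − x) + f − y ≥ 1 − 4d > 0`, so `q₀ ↦ Ŵ₅` is antitone on `[e + e₀ − x, 1]`.
-/

lemma div_add_le_div_add_of_nonpos {c p q : ℝ} (hc : c ≤ 0) (hp : 0 < p + c) (hpq : p ≤ q) :
    q / (q + c) ≤ p / (p + c) := by
  rw [div_le_div_iff₀ (by linarith) hp]
  nlinarith [mul_nonneg (sub_nonneg.2 hpq) (neg_nonneg.2 hc)]

lemma W5hat_antitoneOn {x y e₀ e f : ℝ} (he₀ : 0 ≤ e₀) (he : 0 < e) (hf : 0 < f)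
    (hfy : f ≤ y) (hefy : 0 < e + f - y) :
    AntitoneOn (W5hat x y e₀ e f) {q | 0 < q + f - y} := by
  intro p (hp : 0 < p + f - y) q (hq : 0 < q + f - y) hpq
  have hp₀ : 0 < p := by linarith
  have hM : 0 ≤ e₀ * max (e₀ - e) 0 := mul_nonneg he₀ (le_max_right _ _)
  have first : e₀ * max (e₀ - e) 0 / (q * e) ≤ e₀ * max (e₀ - e) 0 / (p * e) := by
    gcongr
  have third : e₀ * max (e₀ - e) 0 / ((q + f - y) * e)
      ≤ e₀ * max (e₀ - e) 0 / ((p + f - y) * e) := by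
    gcongr
  have second : e₀ ^ 2 * q * max (f - e) 0 / ((q + f - y) * (e + f - y) * e * f)
      ≤ e₀ ^ 2 * p * max (f - e) 0 / ((p + f - y) * (e + f - y) * e * f) := by
    have factor (r : ℝ) : e₀ ^ 2 * r * max (f - e) 0 / ((r + f - y) * (e + f - y) * e * f)
        = r / (r + (f - y)) * (e₀ ^ 2 * max (f - e) 0 / ((e + f - y) * e * f)) := by
      rw [div_mul_div_comm]
      congr 1 <;> ring
    rw [factor, factor]
    have hC : 0 ≤ e₀ ^ 2 * max (f - e) 0 / ((e + f - y) * e * f) := by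
      have := le_max_right (f - e) 0
      positivity
    exact mul_le_mul_of_nonneg_right
      (div_add_le_div_add_of_nonpos (by linarith) (by linarith) hpq) hC
  simp only [W5hat]
  linarith

/-- Under the constraints of program (P5) with `d = (7−√21)/14`,
the objective `Ŵ₅` does not decrease when `q₀` is replaced by its lower bound
`e + e₀ − x`. -/
theorem W5hat_le (d x y e₀ e f q₀ : ℝ)
    (hd : d = (7 - Real.sqrt 21) / 14)
    (hx : x ∈ Set.Icc (1 - d) 1) (hy : y ∈ Set.Icc (1 - d) 1)
    (he₀ : e₀ ∈ Set.Icc (x - d) x) (he : e ∈ Set.Icc (x + y - 1) 1)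
    (hf : f ∈ Set.Icc (y - d) y) (hq₀ : q₀ ∈ Set.Icc (e + e₀ - x) 1) :
    W5hat x y e₀ e f q₀ ≤ W5hat x y e₀ e f (e + e₀ - x) := by
  obtain ⟨hx, -⟩ := hx
  obtain ⟨hy, -⟩ := hy
  obtain ⟨he₀, -⟩ := he₀
  obtain ⟨he, -⟩ := he
  obtain ⟨hf, hfy⟩ := hf
  obtain ⟨hq₀, -⟩ := hq₀
  have hd : d < 1 / 4 := by
    have : (7 / 2 : ℝ) < Real.sqrt 21 :=
      Real.lt_sqrt_of_sq_lt (by norm_num)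
    rw [hd]
    linarith
  have hlow : 0 < e + e₀ - x + f - y := by linarith
  exact W5hat_antitoneOn (by linarith) (by linarith) (by linarith) hfy (by linarith)
    hlow (show 0 < q₀ + f - y by linarith) hq₀
end

section
/- Let d = (7 − √21)/14. Let x, y, e₀, e, f be real numbers with x ∈ [1−d, 1], y ∈ [1−d, 1], e₀ ∈ [x−d, x], e ∈ [x+y−1, 1], f ∈ [y−d, y]. Define Ŵ₆(x,y,e₀,e,f) = e₀·max(e₀−e, 0)/((e+e₀−x)·e) + e₀²·(e+e₀−x)·max(f−e, 0)/((e+e₀−x+f−y)·(e+f−y)·e·f) + e₀·max(e₀−e, 0)/((e+e₀−x+f−y)·e). Then Ŵ₆(x,y,e₀,e,f) ≤ Ŵ₆(x,y,e₀,x+y−1,f). -/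
/-!
Each of the three summands of `Ŵ₆` is nonincreasing in `e` on `[x + y - 1, 1]`. For the first
and the third this is immediate: the ramp in the numerator decreases while the denominator
increases. For the middle one write `a = x + y - 1`, `A = a + p`, `B = a + q`, `C = a + p + q`
with `p = e₀ - x`, `q = f - y`, and `e = a + t`. After clearing denominators the difference of
the two sides is a cubic in `t` with nonnegative coefficients; the linear coefficient is
nonnegative because `C B (A - a) + A a (B + C) ≥ 0`, which follows from `A - a ≥ -d`, `B ≤ 1`,
`C ≤ B` and, as `d ≤ 3/14`, `2 A a ≥ 2 (1 - 3d)(1 - 2d) ≥ d`.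
-/

/-- The objective function `Ŵ₆` of program (P6). -/
noncomputable def W6hat (x y e₀ e f : ℝ) : ℝ :=
  e₀ * max (e₀ - e) 0 / ((e + e₀ - x) * e)
    + e₀ ^ 2 * (e + e₀ - x) * max (f - e) 0 / ((e + e₀ - x + f - y) * (e + f - y) * e * f)
    + e₀ * max (e₀ - e) 0 / ((e + e₀ - x + f - y) * e)

theorem ramp_div_le_of_le {c k u v D₁ D₂ : ℝ} (hc : 0 ≤ c) (huv : u ≤ v) (hD₁ : 0 < D₁)
    (hD : D₁ ≤ D₂) : c * max (k - v) 0 / D₂ ≤ c * max (k - u) 0 / D₁ :=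
  div_le_div₀ (by positivity) (by gcongr) hD₁ hD

theorem mul_ramp_div_le_of_le {a e p q k : ℝ} (hae : a ≤ e) (ha : 0 < a) (hA : 0 < a + p)
    (hB : 0 < a + q) (hC : 0 < a + p + q)
    (h : 0 ≤ (a + p + q) * (a + q) * p + (a + p) * a * ((a + q) + (a + p + q))) :
    (e + p) * max (k - e) 0 / ((e + p + q) * (e + q) * e)
      ≤ (a + p) * max (k - a) 0 / ((a + p + q) * (a + q) * a) := by
  obtain ⟨t, ht, rfl⟩ : ∃ t, 0 ≤ t ∧ e = a + t := ⟨e - a, by linarith, by ring⟩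
  have hA' : 0 < a + t + p := by linarith
  have hB' : 0 < a + t + q := by linarith
  have hC' : 0 < a + t + p + q := by linarith
  rcases le_total k (a + t) with hk | hk
  · rw [max_eq_right (sub_nonpos.2 hk), mul_zero, zero_div]
    positivity
  rw [max_eq_left (sub_nonneg.2 hk), max_eq_left (by linarith),
    div_le_div_iff₀ (by positivity) (by positivity)]
  obtain ⟨g, hgt, rfl⟩ : ∃ g, t ≤ g ∧ k = a + g := ⟨k - a, by linarith, by ring⟩
  have hg : 0 ≤ g := ht.trans hgt
  have h3 : 0 ≤ 3 * a + p + 2 * q := by linarith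
  have expand : (a + p) * (a + g - a) * ((a + t + p + q) * (a + t + q) * (a + t))
      - (a + t + p) * (a + g - (a + t)) * ((a + p + q) * (a + q) * a)
      = t * (g * ((a + p + q) * (a + q) * p + (a + p) * a * ((a + q) + (a + p + q)))
          + (a + p) * ((a + p + q) * (a + q) * a))
        + t ^ 2 * ((a + p) * g * (3 * a + p + 2 * q) + (a + p + q) * (a + q) * a)
        + t ^ 3 * ((a + p) * g) := by ring
  rw [← sub_nonneg, expand]
  positivity

theorem linear_coeff_nonneg {a p q d : ℝ} (hd : d ≤ 3 / 14) (hp : p ∈ Set.Icc (-d) 0)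
    (ha : 1 - 2 * d ≤ a) (hB : a + q ≤ 1) (hC : 0 < a + p + q) :
    0 ≤ (a + p + q) * (a + q) * p + (a + p) * a * ((a + q) + (a + p + q)) := by
  obtain ⟨hp₁, hp₂⟩ := hp
  have hAa : d ≤ 2 * ((a + p) * a) := by
    nlinarith [mul_le_mul (show 5 / 14 ≤ a + p by linarith) (show 4 / 7 ≤ a by linarith)
      (by norm_num) (by linarith)]
  have hneg : -(d * (a + p + q)) ≤ (a + p + q) * (a + q) * p := by
    nlinarith [mul_le_mul_of_nonneg_left hB hC.le, mul_le_mul_of_nonneg_left hp₁ hC.le]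
  nlinarith [mul_le_mul_of_nonneg_right hAa hC.le]

theorem seven_sub_sqrt_21_div_14_le : (7 - Real.sqrt 21) / 14 ≤ 3 / 14 := by
  have h16 : Real.sqrt 16 ≤ Real.sqrt 21 := Real.sqrt_le_sqrt (by norm_num)
  rw [show (16 : ℝ) = 4 ^ 2 by norm_num, Real.sqrt_sq (by norm_num)] at h16
  linarith

/-- Under the constraints of program (P6) with `d = (7−√21)/14`,
the objective `Ŵ₆` does not decrease when `e` is replaced by its lower bound
`x + y − 1`. -/
theorem W6hat_le (d x y e₀ e f : ℝ)
    (hd : d = (7 - Real.sqrt 21) / 14)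
    (hx : x ∈ Set.Icc (1 - d) 1) (hy : y ∈ Set.Icc (1 - d) 1)
    (he₀ : e₀ ∈ Set.Icc (x - d) x) (he : e ∈ Set.Icc (x + y - 1) 1)
    (hf : f ∈ Set.Icc (y - d) y) :
    W6hat x y e₀ e f ≤ W6hat x y e₀ (x + y - 1) f := by
  have hd₁ : d ≤ 3 / 14 := hd ▸ seven_sub_sqrt_21_div_14_le
  obtain ⟨hx₁, hx₂⟩ := hx
  obtain ⟨hy₁, hy₂⟩ := hy
  obtain ⟨he₀₁, he₀₂⟩ := he₀
  obtain ⟨he₁, -⟩ := he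
  obtain ⟨hf₁, hf₂⟩ := hf
  have hcoeff := linear_coeff_nonneg (a := x + y - 1) (p := e₀ - x) (q := f - y) hd₁
    ⟨by linarith, by linarith⟩ (by linarith) (by linarith) (by linarith)
  have hmiddle := mul_le_mul_of_nonneg_left (a := e₀ ^ 2 / f)
    (mul_ramp_div_le_of_le (k := f) he₁ (by linarith) (by linarith) (by linarith) (by linarith)
      hcoeff) (div_nonneg (sq_nonneg e₀) (by linarith))
  simp only [div_mul_div_comm] at hmiddle
  unfold W6hat
  gcongr ?_ + ?_ + ?_
  · exact ramp_div_le_of_le (by linarith) he₁ (by nlinarith) (by nlinarith)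
  · convert hmiddle using 2 <;> ring
  · exact ramp_div_le_of_le (by linarith) he₁ (by nlinarith) (by nlinarith)
end

section
/- Let d = (7 − √21)/14. Let x, y, a, b be real numbers with x ∈ [1−d, 1], y ∈ [1−d, 1], a ∈ [0, d], b ∈ [0, d]. Define Ŵ₇(x,y,a,b) = (x−a)·max(1−y−a, 0)/((x+y−1−a)·(x+y−1)) + (x−a)²·(x+y−1−a)·max(1−x−b, 0)/((x+y−1−a−b)·(x+y−1−b)·(x+y−1)·(y−b)) + (x−a)·max(1−y−a, 0)/((x+y−1−a−b)·(x+y−1)). Then Ŵ₇(x,y,a,b) ≤ Ŵ₇(x,1−d,a,b). -/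
/-!
Each of the three summands of `Ŵ₇` is antitone in `y` as long as all denominators stay positive,
which for `y ≥ 1 − d` holds because `4d < 1`. For the first and third summands this is immediate:
the numerator decreases and the denominator increases with `y`. The second summand is
`(x − a)² · max (1 − x − b) 0 · (s − a)/(s − a − b)` divided by `(s − b) · s · (y − b)`, where
`s = x + y − 1`, and `(s − a)/(s − a − b)` decreases in `s` because `b ≥ 0`.
-/

/-- The objective function `Ŵ₇` of program (P7), written in the variables
`a = x − e₀`, `b = y − f`. -/
noncomputable def W7hat (x y a b : ℝ) : ℝ :=
  (x - a) * max (1 - y - a) 0 / ((x + y - 1 - a) * (x + y - 1))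
    + (x - a) ^ 2 * (x + y - 1 - a) * max (1 - x - b) 0 /
        ((x + y - 1 - a - b) * (x + y - 1 - b) * (x + y - 1) * (y - b))
    + (x - a) * max (1 - y - a) 0 / ((x + y - 1 - a - b) * (x + y - 1))

lemma sub_div_sub_sub_le_of_le {s₀ s a b : ℝ} (hb : 0 ≤ b) (hs : s₀ ≤ s)
    (h₀ : 0 < s₀ - a - b) : (s - a) / (s - a - b) ≤ (s₀ - a) / (s₀ - a - b) := by
  rw [div_le_div_iff₀ (by linarith) h₀]
  nlinarith [mul_nonneg hb (sub_nonneg.2 hs)]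

lemma W7hat_le_of_le {x y₀ y a b : ℝ} (hxa : a ≤ x) (ha : 0 ≤ a) (hb : 0 ≤ b) (hy : y₀ ≤ y)
    (h₀ : 0 < x + y₀ - 1 - a - b) (hy₀ : 0 < y₀ - b) :
    W7hat x y a b ≤ W7hat x y₀ a b := by
  have hratio := sub_div_sub_sub_le_of_le (a := a) hb (by linarith : x + y₀ - 1 ≤ x + y - 1) h₀
  have hregroup : ∀ A N K D E F G : ℝ,
      A * N * K / (D * E * F * G) = A * K * (N / D) / (E * F * G) := by
    intros; ring
  unfold W7hat
  rw [hregroup, hregroup]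
  gcongr
  all_goals
    repeat' first | positivity | apply mul_pos | apply mul_nonneg | apply div_nonneg
    all_goals linarith

/-- Under the constraints of program (P7) with `d = (7−√21)/14`,
the objective `Ŵ₇` does not decrease when `y` is replaced by its lower bound
`1 − d`. -/
theorem W7hat_le (d x y a b : ℝ)
    (hd : d = (7 - Real.sqrt 21) / 14)
    (hx : x ∈ Set.Icc (1 - d) 1) (hy : y ∈ Set.Icc (1 - d) 1)
    (ha : a ∈ Set.Icc 0 d) (hb : b ∈ Set.Icc 0 d) :
    W7hat x y a b ≤ W7hat x (1 - d) a b := by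
  obtain ⟨hx₀, -⟩ := hx
  obtain ⟨hy₀, -⟩ := hy
  obtain ⟨ha₀, ha₁⟩ := ha
  obtain ⟨hb₀, hb₁⟩ := hb
  have hd_lt : 4 * d < 1 := by
    have : (7 / 2 : ℝ) < √21 := (Real.lt_sqrt (by norm_num)).2 (by norm_num)
    rw [hd]
    linarith
  exact W7hat_le_of_le (by linarith) ha₀ hb₀ hy₀ (by linarith) (by linarith)
end

section
/- Let d = (7 − √21)/14. Let x, a, b be real numbers with x ∈ [1−d, 1], a ∈ [0, d], b ∈ [0, d]. Define Ŵ₈(x,a,b) = (x−a)·max(d−a, 0)/((x−d−a)·(x−d)) + (x−a)²·(x−d−a)·max(1−x−b, 0)/((x−d−a−b)·(x−d−b)·(x−d)·(1−d−b)) + (x−a)·max(d−a, 0)/((x−d−a−b)·(x−d)). Then Ŵ₈(x,a,b) ≤ Ŵ₈(1−d,a,b). -/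
/-!
Each of the three terms of `Ŵ₈` is a product of nonnegative factors that are antitone in `x`
for `x > d + a + b`: quotients `(x - q) / (x - p) = 1 + (p - q) / (x - p)` with `q ≤ p`,
quotients `c / (x - p)` with `c ≥ 0`, and `max (1 - x - b) 0` up to a positive constant.
Hence `Ŵ₈` is antitone in `x` there, and `d < 1/4` puts `[1 - d, 1]` in that range.
-/

/-- The objective function `Ŵ₈` of program (P8). -/
noncomputable def W8hat (d x a b : ℝ) : ℝ :=
  (x - a) * max (d - a) 0 / ((x - d - a) * (x - d))
    + (x - a) ^ 2 * (x - d - a) * max (1 - x - b) 0 /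
        ((x - d - a - b) * (x - d - b) * (x - d) * (1 - d - b))
    + (x - a) * max (d - a) 0 / ((x - d - a - b) * (x - d))

lemma sub_div_sub_le_sub_div_sub {K : Type*} [Field K] [LinearOrder K] [IsStrictOrderedRing K]
    {p q s t : K} (hqp : q ≤ p) (hps : p < s) (hst : s ≤ t) :
    (t - q) / (t - p) ≤ (s - q) / (s - p) := by
  rw [div_le_div_iff₀ (by linarith) (by linarith)]
  nlinarith

-- No side conditions are needed: `(u * v)⁻¹ = u⁻¹ * v⁻¹` holds even when a factor vanishes.
lemma W8hat_eq_factored (d x a b : ℝ) :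
    W8hat d x a b =
      (x - a) / (x - d) * (max (d - a) 0 / (x - d - a))
        + (x - a) / (x - (d + b)) * ((x - a) / (x - d)) * ((x - (d + a)) / (x - (d + a + b)))
            * (max (1 - x - b) 0 / (1 - d - b))
        + (x - a) / (x - d) * (max (d - a) 0 / (x - d - a - b)) := by
  rw [W8hat]
  simp only [div_mul_div_comm]
  ring

theorem W8hat_antitoneOn {d a b : ℝ} (ha₀ : 0 ≤ a) (had : a ≤ d) (hb₀ : 0 ≤ b)
    (hdb : d + b ≤ 1) : AntitoneOn (fun x ↦ W8hat d x a b) (Set.Ioi (d + a + b)) := by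
  intro y hy x hx hyx
  simp only [Set.mem_Ioi] at hx hy
  have h₁ : (x - a) / (x - d) ≤ (y - a) / (y - d) :=
    sub_div_sub_le_sub_div_sub had (by linarith) hyx
  have h₂ : (x - a) / (x - (d + b)) ≤ (y - a) / (y - (d + b)) :=
    sub_div_sub_le_sub_div_sub (by linarith) (by linarith) hyx
  have h₃ : (x - (d + a)) / (x - (d + a + b)) ≤ (y - (d + a)) / (y - (d + a + b)) :=
    sub_div_sub_le_sub_div_sub (by linarith) hy hyx
  simp only [W8hat_eq_factored]
  gcongr ?_ * (_ / (?_ - _ - _)) + ?_ * ?_ * ?_ * (max (_ - ?_ - _) _ / _)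
    + ?_ * (_ / (?_ - _ - _ - _))
  all_goals first | linarith | apply_rules [div_nonneg, mul_nonneg, le_max_right] <;> linarith

/-- Under the constraints of program (P8) with `d = (7−√21)/14`,
the objective `Ŵ₈` does not decrease when `x` is replaced by its lower bound
`1 − d`. -/
theorem W8hat_le (d x a b : ℝ)
    (hd : d = (7 - Real.sqrt 21) / 14)
    (hx : x ∈ Set.Icc (1 - d) 1)
    (ha : a ∈ Set.Icc 0 d) (hb : b ∈ Set.Icc 0 d) :
    W8hat d x a b ≤ W8hat d (1 - d) a b := by
  have hd₄ : d < 1 / 4 := by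
    rw [hd, div_lt_iff₀ (by norm_num), sub_lt_comm, Real.lt_sqrt (by norm_num)]
    norm_num
  have h₁ : d + a + b < 1 - d := by linarith [ha.2, hb.2]
  exact W8hat_antitoneOn ha.1 ha.2 hb.1 (by linarith [hb.2]) h₁ (h₁.trans_le hx.1) hx.1
end
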